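/- Let G be a simple connected graph and let v_i, v_j be adjacent vertices. Then LE_G(v_i) · LE_G(v_j) ≥ 1 and LE_G(v_i) + LE_G(v_j) ≥ 2. -/

import Mathlib

open Matrix BigOperators Finset

/-- The absolute value of a real matrix `B`, defined as `(B * Bᵀ)^(1/2)`. -/
noncomputable def matAbs {n : ℕ} (B : Matrix (Fin n) (Fin n) ℝ) : Matrix (Fin n) (Fin n) ℝ :=
  let hA : (B * Bᵀ).PosSemidef := Matrix.conjTranspose_eq_transpose_of_trivial B ▸
    Matrix.posSemidef_self_mul_conjTranspose B
  (hA.1.eigenvectorUnitary : Matrix (Fin n) (Fin n) ℝ) *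
    diagonal ((↑) ∘ (fun x : ℝ => √x) ∘ hA.1.eigenvalues) *
    (star hA.1.eigenvectorUnitary : Matrix (Fin n) (Fin n) ℝ)

/-- The (adjacency) energy of the vertex `i` of the graph `G`: `|A|_{ii}`. -/
noncomputable def vertexEnergy {n : ℕ} (G : SimpleGraph (Fin n)) [DecidableRel G.Adj]
    (i : Fin n) : ℝ :=
  matAbs (G.adjMatrix ℝ) i i

/-- The Laplacian energy of the vertex `i` of the graph `G`: `(|L - (2m/n) I|)_{ii}`. -/
noncomputable def vertexLapEnergy {n : ℕ} (G : SimpleGraph (Fin n)) [DecidableRel G.Adj]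
    (i : Fin n) : ℝ :=
  matAbs (G.lapMatrix ℝ - ((2 * (G.edgeFinset.card : ℝ)) / n) • 1) i i

/-- The normalized Laplacian `𝓛 = I - D^{-1/2} A D^{-1/2}` of the graph `G`. -/
noncomputable def normLap {n : ℕ} (G : SimpleGraph (Fin n)) [DecidableRel G.Adj] :
    Matrix (Fin n) (Fin n) ℝ :=
  1 - Matrix.diagonal (fun i => (Real.sqrt (G.degree i))⁻¹) * G.adjMatrix ℝ *
      Matrix.diagonal (fun i => (Real.sqrt (G.degree i))⁻¹)

/-- The normalized Laplacian energy of the vertex `i` of the graph `G`: `(|𝓛 - I|)_{ii}`. -/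
noncomputable def vertexNormLapEnergy {n : ℕ} (G : SimpleGraph (Fin n)) [DecidableRel G.Adj]
    (i : Fin n) : ℝ :=
  matAbs (normLap G - 1) i i

/-! For a symmetric `B`, the matrices `|B| - B = 2B⁻` and `|B| + B = 2B⁺` are positive
semidefinite. Evaluating their quadratic forms at `s eᵢ + eⱼ` and `s eᵢ - eⱼ` and adding gives
`2 s Bᵢⱼ ≤ s² |B|ᵢᵢ + |B|ⱼⱼ` for every real `s`. For adjacent vertices the off-diagonal entry of
`L - (2m/n) I` is `-1`, so the discriminant of this quadratic yields the product bound and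
`s = -1` the sum bound. -/

open scoped MatrixOrder in
theorem matAbs_eq_cfcAbs_transpose {n : ℕ} (B : Matrix (Fin n) (Fin n) ℝ) :
    matAbs B = CFC.abs Bᵀ := by
  have hP : (B * Bᵀ).PosSemidef := conjTranspose_eq_transpose_of_trivial B ▸
    posSemidef_self_mul_conjTranspose B
  rw [CFC.abs, star_eq_conjTranspose, conjTranspose_eq_transpose_of_trivial, transpose_transpose,
    CFC.sqrt_eq_real_sqrt _ hP.nonneg, cfcₙ_eq_cfc, hP.1.cfc_eq]
  rfl

open scoped MatrixOrder in
theorem posSemidef_matAbs_sub {n : ℕ} {B : Matrix (Fin n) (Fin n) ℝ} (hB : B.IsHermitian) :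
    (matAbs B - B).PosSemidef := by
  rw [← nonneg_iff_posSemidef, matAbs_eq_cfcAbs_transpose,
    ← conjTranspose_eq_transpose_of_trivial, hB.eq, CFC.abs_sub_self B hB.isSelfAdjoint]
  exact smul_nonneg zero_le_two (CFC.negPart_nonneg B)

open scoped MatrixOrder in
theorem posSemidef_matAbs_add {n : ℕ} {B : Matrix (Fin n) (Fin n) ℝ} (hB : B.IsHermitian) :
    (matAbs B + B).PosSemidef := by
  rw [← nonneg_iff_posSemidef, matAbs_eq_cfcAbs_transpose,
    ← conjTranspose_eq_transpose_of_trivial, hB.eq, CFC.abs_add_self B hB.isSelfAdjoint]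
  exact smul_nonneg zero_le_two (CFC.posPart_nonneg B)

theorem Matrix.PosSemidef.quadForm_single_add_single_nonneg {ι : Type*} [Fintype ι]
    [DecidableEq ι] {M : Matrix ι ι ℝ} (hM : M.PosSemidef) (i j : ι) (s r : ℝ) :
    0 ≤ s ^ 2 * M i i + 2 * s * r * M i j + r ^ 2 * M j j := by
  have h := hM.dotProduct_mulVec_nonneg (Pi.single i s + Pi.single j r)
  have hsym : M j i = M i j := by simpa using congr_fun (congr_fun hM.1 i) j
  simp only [star_trivial, mulVec_add, mulVec_single, op_smul_eq_smul, dotProduct_add,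
    dotProduct_smul, add_dotProduct, single_dotProduct, col_apply, smul_eq_mul] at h
  rw [hsym] at h
  linarith

theorem two_mul_mul_apply_le_matAbs {n : ℕ} {B : Matrix (Fin n) (Fin n) ℝ}
    (hB : B.IsHermitian) (i j : Fin n) (s : ℝ) :
    2 * s * B i j ≤ s ^ 2 * matAbs B i i + matAbs B j j := by
  have hP := (posSemidef_matAbs_sub hB).quadForm_single_add_single_nonneg i j s 1
  have hQ := (posSemidef_matAbs_add hB).quadForm_single_add_single_nonneg i j s (-1)
  simp only [Matrix.sub_apply, Matrix.add_apply, one_pow, neg_one_sq] at hP hQ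
  linarith

theorem sq_apply_le_matAbs_mul {n : ℕ} {B : Matrix (Fin n) (Fin n) ℝ} (hB : B.IsHermitian)
    (i j : Fin n) : B i j ^ 2 ≤ matAbs B i i * matAbs B j j := by
  have h := discrim_le_zero (a := matAbs B i i) (b := -2 * B i j) (c := matAbs B j j)
    fun s => by linarith [two_mul_mul_apply_le_matAbs hB i j s]
  rw [discrim] at h
  linarith

theorem two_mul_abs_apply_le_matAbs_add {n : ℕ} {B : Matrix (Fin n) (Fin n) ℝ}
    (hB : B.IsHermitian) (i j : Fin n) : 2 * |B i j| ≤ matAbs B i i + matAbs B j j := by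
  have h₁ := two_mul_mul_apply_le_matAbs hB i j 1
  have h₂ := two_mul_mul_apply_le_matAbs hB i j (-1)
  rcases abs_cases (B i j) with ⟨h, -⟩ | ⟨h, -⟩ <;> linarith

theorem stmt8_general {n : ℕ} (G : SimpleGraph (Fin n)) [DecidableRel G.Adj]
    (i j : Fin n) (hadj : G.Adj i j) :
    vertexLapEnergy G i * vertexLapEnergy G j ≥ 1 ∧
      vertexLapEnergy G i + vertexLapEnergy G j ≥ 2 := by
  set B := G.lapMatrix ℝ - ((2 * (G.edgeFinset.card : ℝ)) / n) • (1 : Matrix (Fin n) (Fin n) ℝ)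
  have hB : B.IsHermitian :=
    (G.isHermitian_lapMatrix ℝ).sub (isHermitian_one.smul (IsSelfAdjoint.all _))
  have hBij : B i j = -1 := by
    simp [B, SimpleGraph.lapMatrix, SimpleGraph.degMatrix, one_apply_ne hadj.ne,
      diagonal_apply_ne _ hadj.ne, hadj]
  have hprod := sq_apply_le_matAbs_mul hB i j
  have hsum := two_mul_abs_apply_le_matAbs_add hB i j
  rw [hBij] at hprod hsum
  norm_num at hprod hsum
  exact ⟨hprod, hsum⟩

theorem stmt8 {n : ℕ} (G : SimpleGraph (Fin n)) [DecidableRel G.Adj]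
    (hconn : G.Connected) (i j : Fin n) (hadj : G.Adj i j) :
    vertexLapEnergy G i * vertexLapEnergy G j ≥ 1 ∧
      vertexLapEnergy G i + vertexLapEnergy G j ≥ 2 :=
  stmt8_general G i j hadj
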